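/- arXiv:2012.06540 — 4 statements merged into one kernel-verified Lean document; each statement's English description precedes it below -/
import Mathlib

section
/- For the polynomial Q(x,y) = ((x+y+xy)^p - x^p - y^p - (xy)^p)/p in Z[x,y] (where p is prime), Q(x,y) lies in the ideal (x,y)^p and Q(x,y)^2 lies in the ideal (x^p, y^p). -/
open MvPolynomial

/-- The ideal of polynomials all of whose monomials have total degree ≥ n. -/
noncomputable def Jdeg (n : ℕ) : Ideal (MvPolynomial (Fin 2) ℤ) where
  carrier := {f | ∀ m ∈ f.support, n ≤ m 0 + m 1}
  zero_mem' := by simp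
  add_mem' := by
    intro a b ha hb m hm
    rcases Finset.mem_union.1 (MvPolynomial.support_add hm) with h | h
    · exact ha m h
    · exact hb m h
  smul_mem' := by
    intro c f hf m hm
    rw [smul_eq_mul] at hm
    obtain ⟨a, ha, b, hb, rfl⟩ := Finset.mem_add.1 (MvPolynomial.support_mul c f hm)
    have := hf b hb
    simp only [Finsupp.add_apply]
    omega

lemma mem_Jdeg {n : ℕ} {f : MvPolynomial (Fin 2) ℤ} :
    f ∈ Jdeg n ↔ ∀ m ∈ f.support, n ≤ m 0 + m 1 := Iff.rfl

lemma Jdeg_mul_le (a b : ℕ) : Jdeg a * Jdeg b ≤ Jdeg (a + b) := by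
  rw [Ideal.mul_le]
  intro f hf g hg m hm
  obtain ⟨mf, hmf, mg, hmg, rfl⟩ := Finset.mem_add.1 (MvPolynomial.support_mul f g hm)
  have h1 := hf mf hmf
  have h2 := hg mg hmg
  simp only [Finsupp.add_apply]
  omega

lemma span_le_Jdeg : (Ideal.span {X 0, X 1} : Ideal (MvPolynomial (Fin 2) ℤ)) ≤ Jdeg 1 := by
  rw [Ideal.span_le]
  rintro f (rfl | rfl) <;> intro m hm <;>
    · rw [MvPolynomial.support_X, Finset.mem_singleton] at hm
      subst hm; simp

lemma pow_le_Jdeg (n : ℕ) :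
    (Ideal.span {X 0, X 1} : Ideal (MvPolynomial (Fin 2) ℤ)) ^ n ≤ Jdeg n := by
  induction n with
  | zero => intro f _ m _; omega
  | succ k ih =>
      rw [pow_succ]
      exact le_trans (Ideal.mul_mono ih span_le_Jdeg) (Jdeg_mul_le k 1)

lemma Jdeg_le_pow (n : ℕ) :
    Jdeg n ≤ (Ideal.span {X 0, X 1} : Ideal (MvPolynomial (Fin 2) ℤ)) ^ n := by
  intro f hf
  have hmem : f ∈ Ideal.span ((fun s => monomial s (1 : ℤ)) ''
      {m : Fin 2 →₀ ℕ | n ≤ m 0 + m 1}) := by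
    rw [MvPolynomial.mem_ideal_span_monomial_image]
    exact fun m hm => ⟨m, hf m hm, le_refl m⟩
  refine Ideal.span_le.2 ?_ hmem
  rintro g ⟨m, hm, rfl⟩
  have hsplit : m = Finsupp.single 0 (m 0) + Finsupp.single 1 (m 1) := by
    ext i; fin_cases i <;> simp
  show (monomial m (1 : ℤ)) ∈ _
  have heq : (monomial m (1 : ℤ)) = X 0 ^ (m 0) * X 1 ^ (m 1) := by
    rw [X_pow_eq_monomial, X_pow_eq_monomial, monomial_mul, mul_one, ← hsplit]
  rw [heq]
  have h0 : (X 0 : MvPolynomial (Fin 2) ℤ) ^ (m 0) ∈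
      (Ideal.span {X 0, X 1} : Ideal (MvPolynomial (Fin 2) ℤ)) ^ (m 0) :=
    Ideal.pow_mem_pow (Ideal.subset_span (by simp)) _
  have h1 : (X 1 : MvPolynomial (Fin 2) ℤ) ^ (m 1) ∈
      (Ideal.span {X 0, X 1} : Ideal (MvPolynomial (Fin 2) ℤ)) ^ (m 1) :=
    Ideal.pow_mem_pow (Ideal.subset_span (by simp)) _
  have := Ideal.mul_mem_mul h0 h1
  rw [← pow_add] at this
  exact Ideal.pow_le_pow_right hm this

/-- For `Q(x,y) = ((x+y+xy)^p - x^p - y^p - (xy)^p)/p` in `ℤ[x,y]`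
(`p` prime), `Q` lies in `(x,y)^p` and `Q^2` lies in `(x^p, y^p)`. -/
theorem stmt_0 (p : ℕ) (hp : p.Prime) (Q : MvPolynomial (Fin 2) ℤ)
    (hQ : (p : MvPolynomial (Fin 2) ℤ) * Q =
      (X 0 + X 1 + X 0 * X 1) ^ p - X 0 ^ p - X 1 ^ p - (X 0 * X 1) ^ p) :
    Q ∈ (Ideal.span {X 0, X 1} : Ideal (MvPolynomial (Fin 2) ℤ)) ^ p ∧
      Q ^ 2 ∈ Ideal.span ({X 0 ^ p, X 1 ^ p} : Set (MvPolynomial (Fin 2) ℤ)) := by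
  set I : Ideal (MvPolynomial (Fin 2) ℤ) := Ideal.span {X 0, X 1} with hI
  have hX0 : (X 0 : MvPolynomial (Fin 2) ℤ) ∈ I := Ideal.subset_span (by simp)
  have hX1 : (X 1 : MvPolynomial (Fin 2) ℤ) ∈ I := Ideal.subset_span (by simp)
  have hRHS : (X 0 + X 1 + X 0 * X 1) ^ p - X 0 ^ p - X 1 ^ p - (X 0 * X 1 : MvPolynomial (Fin 2) ℤ) ^ p
      ∈ I ^ p := by
    refine sub_mem (sub_mem (sub_mem ?_ ?_) ?_) ?_
    · exact Ideal.pow_mem_pow (add_mem (add_mem hX0 hX1) (Ideal.mul_mem_left _ _ hX1)) p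
    · exact Ideal.pow_mem_pow hX0 p
    · exact Ideal.pow_mem_pow hX1 p
    · exact Ideal.pow_mem_pow (Ideal.mul_mem_left _ _ hX1) p
  have hpQ : (p : MvPolynomial (Fin 2) ℤ) * Q ∈ Jdeg p := pow_le_Jdeg p (hQ ▸ hRHS)
  have hQJ : Q ∈ Jdeg p := by
    intro m hm
    refine hpQ m ?_
    rw [mem_support_iff] at hm ⊢
    rw [show ((p : ℕ) : MvPolynomial (Fin 2) ℤ) = C ((p : ℕ) : ℤ) from (map_natCast C p).symm,
      coeff_C_mul]
    exact mul_ne_zero (by exact_mod_cast hp.ne_zero) hm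
  refine ⟨Jdeg_le_pow p hQJ, ?_⟩
  -- second part
  have hset : ({X 0 ^ p, X 1 ^ p} : Set (MvPolynomial (Fin 2) ℤ)) =
      (fun s => monomial s (1 : ℤ)) '' {Finsupp.single 0 p, Finsupp.single 1 p} := by
    rw [Set.image_pair, X_pow_eq_monomial, X_pow_eq_monomial]
  rw [hset, MvPolynomial.mem_ideal_span_monomial_image]
  intro m hm
  rw [pow_two] at hm
  obtain ⟨a, ha, b, hb, rfl⟩ := Finset.mem_add.1 (MvPolynomial.support_mul Q Q hm)
  have h1 := hQJ a ha
  have h2 := hQJ b hb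
  have : p ≤ (a + b) 0 ∨ p ≤ (a + b) 1 := by
    simp only [Finsupp.add_apply]; omega
  rcases this with h | h
  · exact ⟨Finsupp.single 0 p, by simp, by rwa [Finsupp.single_le_iff]⟩
  · exact ⟨Finsupp.single 1 p, by simp, by rwa [Finsupp.single_le_iff]⟩
end

section
/- Let K be a discretely valued field of characteristic p with valuation \nu, and let i_1, i_2, i_3 \ge 0 be integers. Suppose \alpha, \beta, \mu \in K satisfy \nu(\mu^p-\mu) \ge i_2 - p i_1, \nu((\alpha^p-\alpha)+(\mu^p-\mu)\beta) \ge i_3 - p i_1, and \nu(\beta^p-\beta) \ge i_3 - p i_2, and that \nu(\alpha) < 0. Then \nu(\alpha) \ge -i_1. -/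
section Aux

variable {K : Type*} [Field K] (ν : K → WithTop ℤ)

lemma aux_one (hmul : ∀ x y : K, ν (x * y) = ν x + ν y)
    (hzero : ∀ x : K, ν x = ⊤ ↔ x = 0) : ν (1 : K) = 0 := by
  have h := hmul 1 1
  rw [one_mul] at h
  rcases eq_or_ne (ν (1 : K)) ⊤ with h1 | h1
  · exact absurd ((hzero 1).mp h1) one_ne_zero
  · lift ν (1 : K) to ℤ using h1 with n hn
    norm_cast at h ⊢
    omega

lemma aux_neg (hmul : ∀ x y : K, ν (x * y) = ν x + ν y)
    (hzero : ∀ x : K, ν x = ⊤ ↔ x = 0) (x : K) : ν (-x) = ν x := by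
  have hm1 : ν (-1 : K) = 0 := by
    have h := hmul (-1 : K) (-1)
    rw [neg_mul_neg, one_mul, aux_one ν hmul hzero] at h
    rcases eq_or_ne (ν (-1 : K)) ⊤ with h1 | h1
    · rw [h1] at h; simp at h
    · lift ν (-1 : K) to ℤ using h1 with n hn
      norm_cast at h ⊢
      omega
  calc ν (-x) = ν ((-1) * x) := by rw [neg_one_mul]
    _ = ν (-1 : K) + ν x := hmul _ x
    _ = ν x := by rw [hm1, zero_add]

lemma aux_pow (hmul : ∀ x y : K, ν (x * y) = ν x + ν y)
    (hzero : ∀ x : K, ν x = ⊤ ↔ x = 0) (x : K) (a : ℤ) (hx : ν x = (a : WithTop ℤ)) :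
    ∀ n : ℕ, ν (x ^ n) = ((n * a : ℤ) : WithTop ℤ) := by
  intro n
  induction n with
  | zero => simpa using aux_one ν hmul hzero
  | succ k ih =>
      rw [pow_succ, hmul, ih, hx]
      norm_cast
      push_cast
      ring

lemma aux_add_eq (hmul : ∀ x y : K, ν (x * y) = ν x + ν y)
    (hadd : ∀ x y : K, min (ν x) (ν y) ≤ ν (x + y))
    (hzero : ∀ x : K, ν x = ⊤ ↔ x = 0)
    (x y : K) (h : ν x < ν y) : ν (x + y) = ν x := by
  refine le_antisymm ?_ (le_trans (le_min le_rfl h.le) (hadd x y))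
  by_contra hc
  push_neg at hc
  have h2 := hadd (x + y) (-y)
  rw [add_neg_cancel_right] at h2
  have : ν x < min (ν (x + y)) (ν (-y)) := by
    refine lt_min hc ?_
    rw [aux_neg ν hmul hzero]
    exact h
  exact absurd h2 (not_le_of_gt this)

end Aux

/-- given the three valuation conditions on `℘(μ)`, `℘(α)+℘(μ)β`, `℘(β)`
and `ν(α) < 0`, one has `ν(α) ≥ -i₁`. -/
theorem stmt_6 (p : ℕ) (hp : p.Prime) {K : Type*} [Field K] [CharP K p]
    (ν : K → WithTop ℤ)
    (hmul : ∀ x y : K, ν (x * y) = ν x + ν y)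
    (hadd : ∀ x y : K, min (ν x) (ν y) ≤ ν (x + y))
    (hzero : ∀ x : K, ν x = ⊤ ↔ x = 0)
    (i₁ i₂ i₃ : ℤ) (hi₁ : 0 ≤ i₁) (hi₂ : 0 ≤ i₂) (hi₃ : 0 ≤ i₃)
    (α β μ : K)
    (hμ : ((i₂ - p * i₁ : ℤ) : WithTop ℤ) ≤ ν (μ ^ p - μ))
    (hαβ : ((i₃ - p * i₁ : ℤ) : WithTop ℤ) ≤ ν ((α ^ p - α) + (μ ^ p - μ) * β))
    (hβ : ((i₃ - p * i₂ : ℤ) : WithTop ℤ) ≤ ν (β ^ p - β))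
    (hα : ν α < 0) :
    ((-i₁ : ℤ) : WithTop ℤ) ≤ ν α := by
  have hp2 : (2 : ℤ) ≤ (p : ℤ) := by exact_mod_cast hp.two_le
  by_contra hc
  push_neg at hc
  -- ν α is a finite integer a < -i₁, a < 0
  have hne : ν α ≠ ⊤ := ne_top_of_lt hα
  lift ν α to ℤ using hne with a ha
  have ha0 : a < 0 := by exact_mod_cast hα
  have hai : a < -i₁ := by exact_mod_cast hc
  -- ν(α^p - α) = p * a
  have hwp : ∀ x : K, ∀ b : ℤ, ν x = (b : WithTop ℤ) → b < 0 →
      ν (x ^ p - x) = ((p * b : ℤ) : WithTop ℤ) := by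
    intro x b hb hb0
    have hxp : ν (x ^ p) = ((p * b : ℤ) : WithTop ℤ) := aux_pow ν hmul hzero x b hb p
    rw [sub_eq_add_neg]
    rw [aux_add_eq ν hmul hadd hzero _ _ (by
      rw [hxp, aux_neg ν hmul hzero, hb]
      exact_mod_cast (by nlinarith : (p : ℤ) * b < b))]
    exact hxp
  have hpa : ν (α ^ p - α) = ((p * a : ℤ) : WithTop ℤ) := hwp α a ha.symm ha0
  -- ν(℘μ * β) = p * a
  have hsum_gt : ((p * a : ℤ) : WithTop ℤ) < ν ((α ^ p - α) + (μ ^ p - μ) * β) := by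
    refine lt_of_lt_of_le ?_ hαβ
    exact_mod_cast (by nlinarith : (p : ℤ) * a < i₃ - p * i₁)
  have hμβ : ν ((μ ^ p - μ) * β) = ((p * a : ℤ) : WithTop ℤ) := by
    have key : ν (-(α ^ p - α) + ((α ^ p - α) + (μ ^ p - μ) * β))
        = ν (-(α ^ p - α)) := by
      apply aux_add_eq ν hmul hadd hzero
      rw [aux_neg ν hmul hzero, hpa]
      exact hsum_gt
    rw [neg_add_cancel_left] at key
    rw [key, aux_neg ν hmul hzero, hpa]
  rw [hmul] at hμβ
  -- extract finite values
  have hμne : ν (μ ^ p - μ) ≠ ⊤ := by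
    intro h; rw [h, top_add] at hμβ; exact WithTop.coe_ne_top hμβ.symm
  have hβne : ν β ≠ ⊤ := by
    intro h; rw [h, add_top] at hμβ; exact WithTop.coe_ne_top hμβ.symm
  lift ν (μ ^ p - μ) to ℤ using hμne with m hm
  lift ν β to ℤ using hβne with b hb
  have hmb : m + b = p * a := by exact_mod_cast hμβ
  have hm' : i₂ - p * i₁ ≤ m := by exact_mod_cast hμ
  have hbval : b ≤ -(p : ℤ) - i₂ := by nlinarith
  have hb0 : b < 0 := by nlinarith
  have hpb : ν (β ^ p - β) = ((p * b : ℤ) : WithTop ℤ) := hwp β b hb.symm hb0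
  rw [hpb] at hβ
  have hβ' : i₃ - p * i₂ ≤ p * b := by exact_mod_cast hβ
  nlinarith
end

section
/- Let R be a discrete valuation ring with fraction field K of characteristic p, uniformizer \pi. Let i_1,i_2,i_3 \ge 0 be integers and \mu,\alpha,\beta \in K satisfy \nu(\mu^p-\mu)\ge i_2 - pi_1, \nu((\alpha^p-\alpha)+(\mu^p-\mu)\beta)\ge i_3 - pi_1, \nu(\beta^p-\beta)\ge i_3 - pi_2. Then in K[\xi_1,\xi_2,\xi_3]/(\xi_1^p-\xi_1, \xi_2^p-\xi_2, \xi_3^p-\xi_3), the R-subalgebra generated by u_1=\pi^{i_1}(\xi_1-\mu\xi_2-\alpha\xi_3), u_2=\pi^{i_2}(\xi_2-\beta\xi_3), u_3=\pi^{i_3}\xi_3 is finitely generated as an R-module; specifically each u_k satisfies a monic polynomial of degree p over the R-subalgebra generated by u_{k+1},\dots,u_3. -/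
open MvPolynomial

/-!
In characteristic `p` the Frobenius is additive and fixes every `ξᵢ`, so
`uₖ ^ p = π^{(p-1)iₖ} uₖ - (K-linear combination of the later generators)`. The valuation
hypotheses say precisely that the coefficients of this combination lie in `R`; hence `uₖ` is a root
of the monic polynomial `X ^ p - c X + d` over the `R`-algebra generated by the later generators,
and the tower `R ⊆ R[u₃] ⊆ R[u₂, u₃] ⊆ R[u₁, u₂, u₃]` is integral, hence finite.
-/

section Valuation

variable {K : Type*} [Field K] {ν : K → WithTop ℤ}

theorem map_one_of_map_mul (hmul : ∀ x y : K, ν (x * y) = ν x + ν y)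
    (hzero : ∀ x : K, ν x = ⊤ ↔ x = 0) : ν 1 = 0 := by
  have h := hmul 1 1
  rw [mul_one] at h
  cases h1 : ν 1 with
  | top => exact absurd ((hzero 1).1 h1) one_ne_zero
  | coe a => rw [h1] at h; norm_cast at h ⊢; omega

theorem ne_zero_of_map_ne_top (hzero : ∀ x : K, ν x = ⊤ ↔ x = 0) {x : K} (hx : ν x ≠ ⊤) :
    x ≠ 0 :=
  fun h ↦ hx ((hzero x).2 h)

theorem zero_le_map_pow_of_map_mul (hmul : ∀ x y : K, ν (x * y) = ν x + ν y)
    (hzero : ∀ x : K, ν x = ⊤ ↔ x = 0) {x : K} (hx : 0 ≤ ν x) (n : ℕ) : 0 ≤ ν (x ^ n) := by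
  induction n with
  | zero => rw [pow_zero, map_one_of_map_mul hmul hzero]
  | succ n ih => rw [pow_succ, hmul]; exact add_nonneg ih hx

theorem map_zpow_of_map_mul (hmul : ∀ x y : K, ν (x * y) = ν x + ν y)
    (hzero : ∀ x : K, ν x = ⊤ ↔ x = 0) {π : K} (hπ : ν π = (1 : ℤ)) (n : ℤ) :
    ν (π ^ n) = n := by
  have hπ0 : π ≠ 0 := ne_zero_of_map_ne_top hzero (by simp [hπ])
  induction n using Int.induction_on with
  | zero => rw [zpow_zero, map_one_of_map_mul hmul hzero]; rfl
  | succ k ih => rw [zpow_add_one₀ hπ0, hmul, ih, hπ]; norm_cast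
  | pred k ih =>
    have h := hmul (π ^ (-(k : ℤ) - 1)) π
    rw [← zpow_add_one₀ hπ0, sub_add_cancel, ih, hπ] at h
    cases hv : ν (π ^ (-(k : ℤ) - 1)) with
    | top => rw [hv] at h; simp at h
    | coe a => rw [hv] at h; norm_cast at h ⊢; omega

theorem zero_le_map_mul_zpow (hmul : ∀ x y : K, ν (x * y) = ν x + ν y)
    (hzero : ∀ x : K, ν x = ⊤ ↔ x = 0) {π : K} (hπ : ν π = (1 : ℤ)) {x : K} {m n : ℤ}
    (hx : (m : WithTop ℤ) ≤ ν x) (hmn : 0 ≤ m + n) : 0 ≤ ν (x * π ^ n) := by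
  rw [hmul, map_zpow_of_map_mul hmul hzero hπ]
  calc (0 : WithTop ℤ) ≤ ((m + n : ℤ) : WithTop ℤ) := by exact_mod_cast hmn
    _ ≤ ν x + n := by push_cast; exact add_le_add_left hx _

end Valuation

section Frobenius

variable {K A : Type*} [Field K] [CommRing A] [Algebra K A]

theorem smul_pow_of_pow_eq_sub {n : ℕ} (hn : n ≠ 0) (c : K) {w z : A} (h : w ^ n = w - z) :
    (c • w) ^ n = c ^ (n - 1) • (c • w) - c ^ n • z := by
  rw [smul_pow, h, smul_sub, smul_smul, ← pow_succ, Nat.sub_add_cancel (Nat.pos_of_ne_zero hn)]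

theorem smul_pow_of_pow_eq_self {n : ℕ} (hn : n ≠ 0) (c : K) {ξ : A} (h : ξ ^ n = ξ) :
    (c • ξ) ^ n = c ^ (n - 1) • c • ξ := by
  simpa using smul_pow_of_pow_eq_sub hn c (by rw [h, sub_zero] : ξ ^ n = ξ - 0)

theorem zpow_pow_smul_smul {π : K} (hπ : π ≠ 0) (n : ℕ) (i j : ℤ) (a : K) (x : A) :
    (π ^ i) ^ n • a • x = (a * π ^ (n * i - j)) • π ^ j • x := by
  have : (π ^ i) ^ n = π ^ (n * i - j) * π ^ j := by
    rw [← zpow_natCast, ← zpow_mul, ← zpow_add₀ hπ]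
    ring_nf
  rw [smul_smul, smul_smul, this]
  ring_nf

variable {p : ℕ} [Fact p.Prime] [CharP A p] {π : K} {ξ₁ ξ₂ ξ₃ : A}

theorem sub_smul_pow_char (ξ η : A) (a : K) (hη : η ^ p = η) :
    (ξ - a • η) ^ p = ξ ^ p - a ^ p • η := by
  rw [sub_pow_char, smul_pow, hη]

theorem pow_char_u₂ (hπ : π ≠ 0) (i₂ i₃ : ℤ) (β : K) (hξ₂ : ξ₂ ^ p = ξ₂) (hξ₃ : ξ₃ ^ p = ξ₃) :
    (π ^ i₂ • (ξ₂ - β • ξ₃)) ^ p = (π ^ i₂) ^ (p - 1) • (π ^ i₂ • (ξ₂ - β • ξ₃)) -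
      ((β ^ p - β) * π ^ (p * i₂ - i₃)) • (π ^ i₃ • ξ₃) := by
  have hw : (ξ₂ - β • ξ₃) ^ p = (ξ₂ - β • ξ₃) - (β ^ p - β) • ξ₃ := by
    rw [sub_smul_pow_char _ _ _ hξ₃, hξ₂]; module
  rw [smul_pow_of_pow_eq_sub (Fact.out : p.Prime).ne_zero _ hw, zpow_pow_smul_smul hπ p i₂ i₃]

theorem pow_char_u₁ (hπ : π ≠ 0) (i₁ i₂ i₃ : ℤ) (μ α β : K) (hξ₁ : ξ₁ ^ p = ξ₁)
    (hξ₂ : ξ₂ ^ p = ξ₂) (hξ₃ : ξ₃ ^ p = ξ₃) :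
    (π ^ i₁ • (ξ₁ - μ • ξ₂ - α • ξ₃)) ^ p =
      (π ^ i₁) ^ (p - 1) • (π ^ i₁ • (ξ₁ - μ • ξ₂ - α • ξ₃)) -
      ((μ ^ p - μ) * π ^ (p * i₁ - i₂)) • (π ^ i₂ • (ξ₂ - β • ξ₃)) -
      (((α ^ p - α) + (μ ^ p - μ) * β) * π ^ (p * i₁ - i₃)) • (π ^ i₃ • ξ₃) := by
  have hw : (ξ₁ - μ • ξ₂ - α • ξ₃) ^ p = (ξ₁ - μ • ξ₂ - α • ξ₃) -
      ((μ ^ p - μ) • (ξ₂ - β • ξ₃) + ((α ^ p - α) + (μ ^ p - μ) * β) • ξ₃) := by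
    rw [sub_smul_pow_char _ _ _ hξ₃, sub_smul_pow_char _ _ _ hξ₂, hξ₁]; module
  rw [smul_pow_of_pow_eq_sub (Fact.out : p.Prime).ne_zero _ hw, smul_add,
    zpow_pow_smul_smul hπ p i₁ i₂, zpow_pow_smul_smul hπ p i₁ i₃, ← sub_sub]

end Frobenius

section Integral

open Polynomial

theorem exists_monic_natDegree_eq_aeval_eq_zero {B A : Type*} [CommRing B] [CommRing A]
    [Nontrivial A] [Algebra B A] {n : ℕ} (hn : 1 < n) {x : A} (b d : B)
    (h : x ^ n = b • x - algebraMap B A d) :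
    ∃ f : B[X], f.Monic ∧ f.natDegree = n ∧ aeval x f = 0 := by
  have : Nontrivial B := (algebraMap B A).domain_nontrivial
  have hdeg : (Polynomial.C b * Polynomial.X - Polynomial.C d).degree < (n : WithBot ℕ) :=
    (degree_sub_le _ _).trans_lt <| max_lt
      ((degree_C_mul_X_le b).trans_lt (by exact_mod_cast hn))
      (degree_C_le.trans_lt (by exact_mod_cast hn.pos))
  refine ⟨Polynomial.X ^ n - (Polynomial.C b * Polynomial.X - Polynomial.C d),
    monic_X_pow_sub hdeg, ?_, ?_⟩
  · rw [← degree_X_pow (R := B) n] at hdeg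
    exact natDegree_eq_of_degree_eq_some
      ((degree_sub_eq_left_of_degree_lt hdeg).trans (degree_X_pow n))
  · simp [h, Algebra.smul_def]

theorem Subalgebra.exists_monic_natDegree_eq_aeval_eq_zero {R K A : Type*} [CommRing R]
    [CommRing K] [CommRing A] [Nontrivial A] [Algebra R K] [Algebra K A] [Algebra R A]
    [IsScalarTower R K A] (S : Subalgebra R A) {n : ℕ} (hn : 1 < n) {x y : A} {c : K}
    (hc : c ∈ (algebraMap R K).range) (hy : y ∈ S) (h : x ^ n = c • x - y) :
    ∃ f : S[X], f.Monic ∧ f.natDegree = n ∧ aeval x f = 0 := by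
  obtain ⟨r, rfl⟩ := hc
  exact _root_.exists_monic_natDegree_eq_aeval_eq_zero hn (algebraMap R S r) ⟨y, hy⟩
    (by rw [h, algebraMap_smul, algebraMap_smul]; rfl)

theorem Subalgebra.smul_mem_of_mem_range {R K A : Type*} [CommRing R]
    [CommRing K] [CommRing A] [Algebra R K] [Algebra K A] [Algebra R A]
    [IsScalarTower R K A] (S : Subalgebra R A) {y : A} {c : K}
    (hc : c ∈ (algebraMap R K).range) (hy : y ∈ S) : c • y ∈ S := by
  obtain ⟨r, rfl⟩ := hc
  rw [algebraMap_smul]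
  exact S.smul_mem hy r

theorem IsIntegral.of_isIntegral_adjoin {R A : Type*} [CommRing R] [CommRing A] [Algebra R A]
    {s : Set A} (hs : ∀ y ∈ s, IsIntegral R y) {x : A} (hx : IsIntegral (Algebra.adjoin R s) x) :
    IsIntegral R x :=
  have := Algebra.IsIntegral.adjoin hs
  isIntegral_trans x hx

theorem fg_adjoin_of_isIntegral_adjoin {R A : Type*} [CommRing R] [CommRing A] [Algebra R A]
    {u₁ u₂ u₃ : A} (h₁ : IsIntegral (Algebra.adjoin R {u₂, u₃}) u₁)
    (h₂ : IsIntegral (Algebra.adjoin R {u₃}) u₂) (h₃ : IsIntegral R u₃) :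
    (Subalgebra.toSubmodule (Algebra.adjoin R {u₁, u₂, u₃})).FG := by
  have h₂' : IsIntegral R u₂ := IsIntegral.of_isIntegral_adjoin (by simpa using h₃) h₂
  have h₁' : IsIntegral R u₁ := IsIntegral.of_isIntegral_adjoin (by simp [h₂', h₃]) h₁
  exact fg_adjoin_of_finite (by simp) (by simp [h₁', h₂', h₃])

end Integral

theorem Ideal.Quotient.mk_span_pow_eq_self {R : Type*} [CommRing R] {s : Set R} {x : R} {n : ℕ}
    (hx : x ^ n - x ∈ s) : Ideal.Quotient.mk (Ideal.span s) x ^ n = Ideal.Quotient.mk _ x := by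
  rw [← map_pow, Ideal.Quotient.eq]
  exact Ideal.subset_span hx

theorem MvPolynomial.span_ne_top_of_constantCoeff_eq_zero {σ K : Type*} [CommRing K]
    [Nontrivial K] {s : Set (MvPolynomial σ K)} (hs : ∀ f ∈ s, constantCoeff f = 0) :
    Ideal.span s ≠ ⊤ :=
  ne_top_of_le_ne_top (RingHom.ker_ne_top constantCoeff) (Ideal.span_le.2 hs)

theorem stmt_12_general (p : ℕ) (hp : p.Prime) {K : Type*} [Field K] [CharP K p]
    {R : Type*} [CommRing R] [Algebra R K]
    (ν : K → WithTop ℤ)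
    (hmul : ∀ x y : K, ν (x * y) = ν x + ν y)
    (hzero : ∀ x : K, ν x = ⊤ ↔ x = 0)
    (π : K) (hπ : ν π = (1 : ℤ))
    (hR : ∀ x : K, (∃ r : R, algebraMap R K r = x) ↔ (0 : WithTop ℤ) ≤ ν x)
    (i₁ i₂ i₃ : ℤ) (hi₁ : 0 ≤ i₁) (hi₂ : 0 ≤ i₂) (hi₃ : 0 ≤ i₃)
    (μ α β : K)
    (hμ : ((i₂ - p * i₁ : ℤ) : WithTop ℤ) ≤ ν (μ ^ p - μ))
    (hαβ : ((i₃ - p * i₁ : ℤ) : WithTop ℤ) ≤ ν ((α ^ p - α) + (μ ^ p - μ) * β))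
    (hβ : ((i₃ - p * i₂ : ℤ) : WithTop ℤ) ≤ ν (β ^ p - β)) :
    let A := MvPolynomial (Fin 3) K ⧸
      (Ideal.span {X 0 ^ p - X 0, X 1 ^ p - X 1, X 2 ^ p - X 2} :
        Ideal (MvPolynomial (Fin 3) K))
    let q := Ideal.Quotient.mk (Ideal.span {X 0 ^ p - X 0, X 1 ^ p - X 1, X 2 ^ p - X 2} :
        Ideal (MvPolynomial (Fin 3) K))
    let ξ₁ : A := q (X 0)
    let ξ₂ : A := q (X 1)
    let ξ₃ : A := q (X 2)
    let u₁ : A := π ^ i₁ • (ξ₁ - μ • ξ₂ - α • ξ₃)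
    let u₂ : A := π ^ i₂ • (ξ₂ - β • ξ₃)
    let u₃ : A := π ^ i₃ • ξ₃
    (Subalgebra.toSubmodule (Algebra.adjoin R {u₁, u₂, u₃})).FG ∧
      (∃ f : Polynomial (Algebra.adjoin R ({u₂, u₃} : Set A)),
        f.Monic ∧ f.natDegree = p ∧ Polynomial.aeval u₁ f = 0) ∧
      (∃ f : Polynomial (Algebra.adjoin R ({u₃} : Set A)),
        f.Monic ∧ f.natDegree = p ∧ Polynomial.aeval u₂ f = 0) ∧
      (∃ f : Polynomial R, f.Monic ∧ f.natDegree = p ∧ Polynomial.aeval u₃ f = 0) := by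
  intro A q ξ₁ ξ₂ ξ₃ u₁ u₂ u₃
  have : Fact p.Prime := ⟨hp⟩
  have hπ0 : π ≠ 0 := ne_zero_of_map_ne_top hzero (by simp [hπ])
  have : Nontrivial A := Ideal.Quotient.nontrivial_iff.2 <|
    MvPolynomial.span_ne_top_of_constantCoeff_eq_zero (by simp [hp.ne_zero])
  have : CharP A p := charP_of_injective_algebraMap (algebraMap K A).injective p
  have hξ (i : Fin 3) : q (X i) ^ p = q (X i) :=
    Ideal.Quotient.mk_span_pow_eq_self (by fin_cases i <;> simp)
  have hc {i : ℤ} (hi : 0 ≤ i) : (π ^ i) ^ (p - 1) ∈ (algebraMap R K).range :=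
    (hR _).2 <| zero_le_map_pow_of_map_mul hmul hzero
      (by rw [map_zpow_of_map_mul hmul hzero hπ]; exact_mod_cast hi) _
  have hd {x : K} {m n : ℤ} (hx : (m : WithTop ℤ) ≤ ν x) (hmn : 0 ≤ m + n) :
      x * π ^ n ∈ (algebraMap R K).range :=
    (hR _).2 <| zero_le_map_mul_zpow hmul hzero hπ hx hmn
  have h₃ : ∃ f : Polynomial R, f.Monic ∧ f.natDegree = p ∧ Polynomial.aeval u₃ f = 0 := by
    obtain ⟨r₃, hr₃⟩ := hc hi₃
    refine exists_monic_natDegree_eq_aeval_eq_zero hp.one_lt r₃ 0 ?_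
    rw [map_zero, sub_zero, ← algebraMap_smul K, hr₃]
    exact smul_pow_of_pow_eq_self hp.ne_zero _ (hξ 2)
  have h₂ : ∃ f : Polynomial (Algebra.adjoin R ({u₃} : Set A)),
      f.Monic ∧ f.natDegree = p ∧ Polynomial.aeval u₂ f = 0 :=
    Subalgebra.exists_monic_natDegree_eq_aeval_eq_zero _ hp.one_lt (hc hi₂)
      (Subalgebra.smul_mem_of_mem_range _ (hd hβ (by linarith)) (Algebra.subset_adjoin rfl))
      (pow_char_u₂ hπ0 i₂ i₃ β (hξ 1) (hξ 2))
  have h₁ : ∃ f : Polynomial (Algebra.adjoin R ({u₂, u₃} : Set A)),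
      f.Monic ∧ f.natDegree = p ∧ Polynomial.aeval u₁ f = 0 :=
    Subalgebra.exists_monic_natDegree_eq_aeval_eq_zero _ hp.one_lt (hc hi₁)
      (add_mem
        (Subalgebra.smul_mem_of_mem_range _ (hd hμ (by linarith))
          (Algebra.subset_adjoin (Set.mem_insert _ _)))
        (Subalgebra.smul_mem_of_mem_range _ (hd hαβ (by linarith))
          (Algebra.subset_adjoin (Set.mem_insert_of_mem _ rfl))))
      ((pow_char_u₁ hπ0 i₁ i₂ i₃ μ α β (hξ 0) (hξ 1) (hξ 2)).trans (sub_sub _ _ _))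
  refine ⟨fg_adjoin_of_isIntegral_adjoin ?_ ?_ ?_, h₁, h₂, h₃⟩
  exacts [h₁.imp fun _ ⟨hf, _, hu⟩ => ⟨hf, hu⟩, h₂.imp fun _ ⟨hf, _, hu⟩ => ⟨hf, hu⟩,
    h₃.imp fun _ ⟨hf, _, hu⟩ => ⟨hf, hu⟩]

/-- in `K[ξ₁,ξ₂,ξ₃]/(ξᵢ^p - ξᵢ)`, the
`R`-subalgebra generated by `u₁ = π^{i₁}(ξ₁-μξ₂-αξ₃)`, `u₂ = π^{i₂}(ξ₂-βξ₃)`,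
`u₃ = π^{i₃}ξ₃` is finitely generated as an `R`-module, and each `u_k` satisfies a
monic polynomial of degree `p` over the `R`-subalgebra generated by the later
generators. Here `R` is the valuation ring of `K` (the image of `R` in `K` is
exactly `{x : ν x ≥ 0}`). -/
theorem stmt_12 (p : ℕ) (hp : p.Prime) {K : Type*} [Field K] [CharP K p]
    {R : Type*} [CommRing R] [Algebra R K]
    (ν : K → WithTop ℤ)
    (hmul : ∀ x y : K, ν (x * y) = ν x + ν y)
    (hadd : ∀ x y : K, min (ν x) (ν y) ≤ ν (x + y))
    (hzero : ∀ x : K, ν x = ⊤ ↔ x = 0)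
    (π : K) (hπ : ν π = (1 : ℤ))
    (hR : ∀ x : K, (∃ r : R, algebraMap R K r = x) ↔ (0 : WithTop ℤ) ≤ ν x)
    (i₁ i₂ i₃ : ℤ) (hi₁ : 0 ≤ i₁) (hi₂ : 0 ≤ i₂) (hi₃ : 0 ≤ i₃)
    (μ α β : K)
    (hμ : ((i₂ - p * i₁ : ℤ) : WithTop ℤ) ≤ ν (μ ^ p - μ))
    (hαβ : ((i₃ - p * i₁ : ℤ) : WithTop ℤ) ≤ ν ((α ^ p - α) + (μ ^ p - μ) * β))
    (hβ : ((i₃ - p * i₂ : ℤ) : WithTop ℤ) ≤ ν (β ^ p - β)) :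
    let A := MvPolynomial (Fin 3) K ⧸
      (Ideal.span {X 0 ^ p - X 0, X 1 ^ p - X 1, X 2 ^ p - X 2} :
        Ideal (MvPolynomial (Fin 3) K))
    let q := Ideal.Quotient.mk (Ideal.span {X 0 ^ p - X 0, X 1 ^ p - X 1, X 2 ^ p - X 2} :
        Ideal (MvPolynomial (Fin 3) K))
    let ξ₁ : A := q (X 0)
    let ξ₂ : A := q (X 1)
    let ξ₃ : A := q (X 2)
    let u₁ : A := π ^ i₁ • (ξ₁ - μ • ξ₂ - α • ξ₃)
    let u₂ : A := π ^ i₂ • (ξ₂ - β • ξ₃)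
    let u₃ : A := π ^ i₃ • ξ₃
    (Subalgebra.toSubmodule (Algebra.adjoin R {u₁, u₂, u₃})).FG ∧
      (∃ f : Polynomial (Algebra.adjoin R ({u₂, u₃} : Set A)),
        f.Monic ∧ f.natDegree = p ∧ Polynomial.aeval u₁ f = 0) ∧
      (∃ f : Polynomial (Algebra.adjoin R ({u₃} : Set A)),
        f.Monic ∧ f.natDegree = p ∧ Polynomial.aeval u₂ f = 0) ∧
      (∃ f : Polynomial R, f.Monic ∧ f.natDegree = p ∧ Polynomial.aeval u₃ f = 0) :=
  stmt_12_general p hp ν hmul hzero π hπ hR i₁ i₂ i₃ hi₁ hi₂ hi₃ μ α β hμ hαβ hβ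
end

section
/- With K of characteristic p, G = C_p = \langle g \rangle, and \xi \in (K[G])^* defined by \langle \xi, (g-1)^j \rangle = \delta_{1,j} for 0 \le j \le p-1, one has \xi^p = \xi in the dual algebra (K[G])^*. -/
/-!
Convolution is multiplicative on group-like elements, so `ξ^p (g^n) = ξ(g^n)^p`, and a functional
on `K[G]` is determined by its values on `G`. Expanding `g^n = ((g - 1) + 1)^n` binomially gives
`ξ(g^n) = n` for `n < p`, and `n^p = n` in characteristic `p`.
-/

open TensorProduct

/-- Comultiplication on a group algebra, `g ↦ g ⊗ g`. -/
noncomputable def gaComul (K G : Type*) [CommRing K] [Monoid G] :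
    MonoidAlgebra K G →ₐ[K] (MonoidAlgebra K G ⊗[K] MonoidAlgebra K G) :=
  MonoidAlgebra.lift K _ G
    { toFun := fun g => MonoidAlgebra.of K G g ⊗ₜ[K] MonoidAlgebra.of K G g
      map_one' := by
        simp [← MonoidAlgebra.one_def, Algebra.TensorProduct.one_def]
      map_mul' := fun a b => by
        simp [Algebra.TensorProduct.tmul_mul_tmul] }

/-- Counit on a group algebra, `g ↦ 1`. -/
noncomputable def gaCounit (K G : Type*) [CommRing K] [Monoid G] :
    MonoidAlgebra K G →ₐ[K] K :=
  MonoidAlgebra.lift K K G 1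

/-- Convolution product of linear functionals on a group algebra, dual to the
coalgebra structure `Δ(g) = g ⊗ g`. -/
noncomputable def gaConv {K G : Type*} [CommRing K] [Monoid G]
    (f g : MonoidAlgebra K G →ₗ[K] K) : MonoidAlgebra K G →ₗ[K] K :=
  (LinearMap.mul' K K).comp ((TensorProduct.map f g).comp (gaComul K G).toLinearMap)

/-- Convolution powers of a functional; the 0-th power is the unit `ε` of the dual
algebra. -/
noncomputable def gaConvPow {K G : Type*} [CommRing K] [Monoid G]
    (f : MonoidAlgebra K G →ₗ[K] K) : ℕ → (MonoidAlgebra K G →ₗ[K] K)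
  | 0 => (gaCounit K G).toLinearMap
  | n + 1 => gaConv f (gaConvPow f n)

section Convolution
variable {K G : Type*} [CommRing K] [Monoid G]

open MonoidAlgebra

lemma gaConv_of (f h : MonoidAlgebra K G →ₗ[K] K) (a : G) :
    gaConv f h (of K G a) = f (of K G a) * h (of K G a) := by
  simp [gaConv, gaComul]

lemma gaConvPow_of (f : MonoidAlgebra K G →ₗ[K] K) (n : ℕ) (a : G) :
    gaConvPow f n (of K G a) = f (of K G a) ^ n := by
  induction n with
  | zero => simp [gaConvPow, gaCounit]
  | succ n ih => rw [gaConvPow, gaConv_of, ih, pow_succ']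

lemma gaConvPow_eq_self_of_forall_pow_eq {f : MonoidAlgebra K G →ₗ[K] K} {n : ℕ}
    (h : ∀ a, f (of K G a) ^ n = f (of K G a)) : gaConvPow f n = f := by
  ext a
  exact (gaConvPow_of f n a).trans (h a)

end Convolution

lemma map_pow_eq_natCast_of_map_sub_one_pow {A R F : Type*} [Ring A] [Semiring R]
    [FunLike F A R] [AddMonoidHomClass F A R] {ξ : F} {x : A} {m : ℕ}
    (hξ : ∀ j ≤ m, ξ ((x - 1) ^ j) = if j = 1 then 1 else 0) {n : ℕ} (hn : n ≤ m) :
    ξ (x ^ n) = n := by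
  have hx : x ^ n = ∑ k ∈ Finset.range (n + 1), n.choose k • (x - 1) ^ k := by
    rw [← sub_add_cancel x 1, (Commute.one_right (x - 1)).add_pow, sub_add_cancel]
    simp only [one_pow, mul_one, nsmul_eq_mul, Nat.cast_comm]
  have hterm : ∀ k ∈ Finset.range (n + 1),
      ξ (n.choose k • (x - 1) ^ k) = if k = 1 then (n.choose k : R) else 0 := by
    intro k hk
    rw [map_nsmul, hξ k (by rw [Finset.mem_range] at hk; omega)]
    split_ifs <;> simp
  rw [hx, map_sum, Finset.sum_congr rfl hterm, Finset.sum_ite_eq']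
  split_ifs with h1
  · rw [Nat.choose_one_right]
  · obtain rfl : n = 0 := by simpa using h1
    rw [Nat.cast_zero]

lemma MonoidAlgebra.of_ofAdd_eq_pow_val {K : Type*} [Semiring K] {p : ℕ} [NeZero p]
    (a : ZMod p) :
    MonoidAlgebra.of K (Multiplicative (ZMod p)) (.ofAdd a)
      = MonoidAlgebra.of K (Multiplicative (ZMod p)) (.ofAdd 1) ^ a.val := by
  rw [← map_pow, ← ofAdd_nsmul, nsmul_one, ZMod.natCast_zmod_val]

/-- for `ξ ∈ (K[C_p])^*` with `⟨ξ, (g-1)^j⟩ = δ_{1,j}`, one has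
`ξ^p = ξ` in the dual (convolution) algebra. -/
theorem stmt_14 (p : ℕ) [Fact p.Prime] {K : Type*} [Field K] [CharP K p]
    (ξ : MonoidAlgebra K (Multiplicative (ZMod p)) →ₗ[K] K)
    (hξ : ∀ j : ℕ, j ≤ p - 1 →
      ξ ((MonoidAlgebra.of K (Multiplicative (ZMod p))
          (Multiplicative.ofAdd (1 : ZMod p)) - 1) ^ j) = if j = 1 then 1 else 0) :
    gaConvPow ξ p = ξ := by
  have hξ_of (a : ZMod p) :
      ξ (MonoidAlgebra.of K _ (.ofAdd a)) = ZMod.castHom (dvd_refl p) K a := by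
    rw [MonoidAlgebra.of_ofAdd_eq_pow_val,
      map_pow_eq_natCast_of_map_sub_one_pow hξ (Nat.le_pred_of_lt (ZMod.val_lt a)),
      ZMod.natCast_val, ZMod.castHom_apply]
  refine gaConvPow_eq_self_of_forall_pow_eq fun a => ?_
  rw [← ofAdd_toAdd a, hξ_of, ← map_pow, ZMod.pow_card]
end
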